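/- arXiv:1206.3767 — 7 statements merged into one kernel-verified Lean document; each statement's English description precedes it below -/
import Mathlib

section
/- Let n ≥ 1 and let σ denote the standard complex symplectic form on ℂ^{2n}, σ((x,ξ),(y,η)) = ξ·y − η·x. Let F ∈ ℂ^{2n×2n} satisfy σ(X, FY) = −σ(FX, Y) for all X, Y ∈ ℂ^{2n}, and set q(X) = σ(X, FX). Assume: (i) Re q(X) ≥ 0 for every X ∈ ℝ^{2n}; (ii) the only X ∈ ℝ^{2n} with (Re F)(Im F)^k X = 0 for all k = 0, 1, …, 2n−1 is X = 0, where Re F and Im F are the entrywise real and imaginary parts of F. Then F has no real eigenvalue, and, counting with algebraic multiplicity (dimension of the generalized eigenspace), F has exactly n eigenvalues λ with Im λ > 0 and exactly n eigenvalues λ with Im λ < 0. -/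
open Matrix Module Complex

/-- The standard complex symplectic form on `ℂ^(2n)`, with a point written as `(x, ξ)`
(`Sum.inl` indices for `x`, `Sum.inr` indices for `ξ`):
`σ((x,ξ),(y,η)) = ξ·y − η·x` with bilinear dot products. -/
noncomputable def sympForm (n : ℕ) (X Y : Fin n ⊕ Fin n → ℂ) : ℂ :=
  (∑ j : Fin n, X (Sum.inr j) * Y (Sum.inl j)) -
    ∑ j : Fin n, Y (Sum.inr j) * X (Sum.inl j)

/-!
Write `σ(X, Y) = X ⬝ᵥ J Y`. Skew-adjointness of `F` means that `J F` is symmetric, so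
`Fᵀ = J F J` is similar to `-F`: the eigenvalues `μ` and `-μ` have the same algebraic multiplicity,
and once there are no real eigenvalues the `2n` eigenvalues split evenly between the half-planes.

For a real eigenvalue `r` with eigenvector `u + i v`, write `F = A + i B` with `A, B` real. Then
`J A` is the matrix of `Re q` on `ℝ^(2n)`, positive semidefinite by (i), and `J B` is symmetric.
The real and imaginary parts of `F (u + i v) = r (u + i v)` give
`u ⬝ᵥ J A u + v ⬝ᵥ J A v = u ⬝ᵥ J B v - v ⬝ᵥ J B u = 0`, hence `A u = A v = 0`. Then `B` maps
`span {u, v}` into itself, so `A Bᵏ` kills `u` and `v` for all `k`, and (ii) forces `u = v = 0`.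
-/

namespace Matrix

section Symplectic

variable {l R : Type*} [Fintype l] [DecidableEq l] [CommRing R]

theorem J_mulVec (x : l ⊕ l → R) :
    J l R *ᵥ x = Sum.elim (fun j => -x (Sum.inr j)) (fun j => x (Sum.inl j)) := by
  ext (j | j) <;> simp [J, mulVec, dotProduct, Fintype.sum_sum_type, fromBlocks, one_apply]

theorem dotProduct_J_mulVec_self (x : l ⊕ l → R) : x ⬝ᵥ J l R *ᵥ x = 0 := by
  simp [J_mulVec, dotProduct, Fintype.sum_sum_type, mul_comm]

theorem J_mul_J_mul (A : Matrix (l ⊕ l) (l ⊕ l) R) : J l R * (J l R * A) = -A := by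
  rw [← Matrix.mul_assoc, J_squared, neg_one_mul]

theorem transpose_eq_J_mul_mul_J {F : Matrix (l ⊕ l) (l ⊕ l) R} (hF : (J l R * F).IsSymm) :
    Fᵀ = J l R * F * J l R := by
  have h : -(Fᵀ * J l R) = J l R * F := by
    simpa [transpose_mul, J_transpose] using hF.eq
  calc Fᵀ = -(Fᵀ * J l R) * J l R := by rw [neg_mul, Matrix.mul_assoc, J_squared]; simp
    _ = J l R * F * J l R := by rw [h]

theorem charpoly_neg_of_isSymm_J_mul {F : Matrix (l ⊕ l) (l ⊕ l) R} (hF : (J l R * F).IsSymm) :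
    (-F).charpoly = F.charpoly := by
  rw [← charpoly_transpose F, transpose_eq_J_mul_mul_J hF, Matrix.mul_assoc, charpoly_mul_comm,
    Matrix.mul_assoc, J_squared, mul_neg, mul_one]

end Symplectic

theorem isSymm_of_dotProduct_mulVec_comm {ι R : Type*} [Fintype ι] [DecidableEq ι] [CommRing R]
    {M : Matrix ι ι R} (h : ∀ x y, x ⬝ᵥ M *ᵥ y = y ⬝ᵥ M *ᵥ x) : M.IsSymm := by
  ext i j
  simpa [mulVec_single, single_dotProduct] using h (Pi.single j 1) (Pi.single i 1)

section RealImaginaryParts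

variable {m ι : Type*} [Fintype ι]

theorem re_mulVec (N : Matrix m ι ℂ) (Z : ι → ℂ) :
    (fun i => ((N *ᵥ Z) i).re) =
      N.map re *ᵥ (fun i => (Z i).re) - N.map im *ᵥ (fun i => (Z i).im) := by
  ext i
  simp [mulVec, dotProduct, Complex.re_sum, Finset.sum_sub_distrib]

theorem im_mulVec (N : Matrix m ι ℂ) (Z : ι → ℂ) :
    (fun i => ((N *ᵥ Z) i).im) =
      N.map re *ᵥ (fun i => (Z i).im) + N.map im *ᵥ (fun i => (Z i).re) := by
  ext i
  simp [mulVec, dotProduct, Complex.im_sum, Finset.sum_add_distrib]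

theorem re_ofReal_dotProduct_mulVec_ofReal [Fintype m] (N : Matrix m ι ℂ) (x : m → ℝ)
    (y : ι → ℝ) :
    ((fun i => (x i : ℂ)) ⬝ᵥ N *ᵥ fun i => (y i : ℂ)).re = x ⬝ᵥ N.map re *ᵥ y := by
  simp [mulVec, dotProduct, Complex.re_sum, Finset.mul_sum]

variable {l : Type*} [Fintype l] [DecidableEq l]

theorem map_re_J_mul (N : Matrix (l ⊕ l) m ℂ) :
    (J l ℂ * N).map re = J l ℝ * N.map re := by
  ext (i | i) j <;> simp [J, mul_apply, fromBlocks, Fintype.sum_sum_type, one_apply]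

theorem map_im_J_mul (N : Matrix (l ⊕ l) m ℂ) :
    (J l ℂ * N).map im = J l ℝ * N.map im := by
  ext (i | i) j <;> simp [J, mul_apply, fromBlocks, Fintype.sum_sum_type, one_apply]

end RealImaginaryParts

theorem mulVec_eq_zero_of_posSemidef_J_mul {l : Type*} [Fintype l] [DecidableEq l]
    {A B : Matrix (l ⊕ l) (l ⊕ l) ℝ} (hA : (J l ℝ * A).PosSemidef) (hB : (J l ℝ * B).IsSymm)
    {u v : l ⊕ l → ℝ} {r : ℝ} (hre : A *ᵥ u - B *ᵥ v = r • u) (him : A *ᵥ v + B *ᵥ u = r • v) :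
    A *ᵥ u = 0 ∧ A *ᵥ v = 0 := by
  have hSu : (J l ℝ * A) *ᵥ u = r • J l ℝ *ᵥ u + (J l ℝ * B) *ᵥ v := by
    rw [← mulVec_mulVec, ← mulVec_mulVec, ← mulVec_smul, ← mulVec_add, ← hre, sub_add_cancel]
  have hSv : (J l ℝ * A) *ᵥ v = r • J l ℝ *ᵥ v - (J l ℝ * B) *ᵥ u := by
    rw [← mulVec_mulVec, ← mulVec_mulVec, ← mulVec_smul, ← mulVec_sub, ← him,
      add_sub_cancel_right]
  have hT : u ⬝ᵥ (J l ℝ * B) *ᵥ v = v ⬝ᵥ (J l ℝ * B) *ᵥ u := by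
    rw [dotProduct_mulVec, ← mulVec_transpose, hB.eq, dotProduct_comm]
  have hsum : u ⬝ᵥ (J l ℝ * A) *ᵥ u + v ⬝ᵥ (J l ℝ * A) *ᵥ v = 0 := by
    rw [hSu, hSv]
    simp only [dotProduct_add, dotProduct_sub, dotProduct_smul, dotProduct_J_mulVec_self, hT]
    simp
  have hu := hA.dotProduct_mulVec_nonneg u
  have hv := hA.dotProduct_mulVec_nonneg v
  simp only [star_trivial] at hu hv
  have hker (x : l ⊕ l → ℝ) (hx : x ⬝ᵥ (J l ℝ * A) *ᵥ x = 0) : A *ᵥ x = 0 := by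
    have h := (hA.dotProduct_mulVec_zero_iff x).1 (by simpa using hx)
    rw [← neg_neg A, ← J_mul_J_mul A, neg_mulVec, ← mulVec_mulVec, h, mulVec_zero, neg_zero]
  exact ⟨hker u (by linarith), hker v (by linarith)⟩

theorem mul_pow_mulVec_eq_zero {ι R : Type*} [Fintype ι] [DecidableEq ι] [CommRing R]
    {A B : Matrix ι ι R} {u v : ι → R} {r : R} (hAu : A *ᵥ u = 0) (hAv : A *ᵥ v = 0)
    (hBu : B *ᵥ u = r • v) (hBv : B *ᵥ v = -(r • u)) (k : ℕ) :
    (A * B ^ k) *ᵥ u = 0 ∧ (A * B ^ k) *ᵥ v = 0 := by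
  induction k with
  | zero => simpa using ⟨hAu, hAv⟩
  | succ k ih =>
    simp only [pow_succ, ← Matrix.mul_assoc, ← mulVec_mulVec, hBu, hBv, mulVec_smul, mulVec_neg]
    simp only [mulVec_mulVec, ih.1, ih.2, smul_zero, neg_zero, and_self]

theorem not_hasEigenvalue_ofReal {l : Type*} [Fintype l] [DecidableEq l]
    {F : Matrix (l ⊕ l) (l ⊕ l) ℂ} (hA : (J l ℝ * F.map re).PosSemidef)
    (hB : (J l ℝ * F.map im).IsSymm)
    (hSing : ∀ x : l ⊕ l → ℝ, (∀ k : ℕ, (F.map re * F.map im ^ k) *ᵥ x = 0) → x = 0) (r : ℝ) :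
    ¬ Module.End.HasEigenvalue F.mulVecLin r := by
  intro hev
  obtain ⟨Z, hZ, hZ0⟩ := hev.exists_hasEigenvector
  have hFZ : F *ᵥ Z = (r : ℂ) • Z := Module.End.mem_eigenspace_iff.1 hZ
  set u := fun i => (Z i).re
  set v := fun i => (Z i).im
  have hre : F.map re *ᵥ u - F.map im *ᵥ v = r • u := by
    rw [← re_mulVec, hFZ]; ext; simp [u]
  have him : F.map re *ᵥ v + F.map im *ᵥ u = r • v := by
    rw [← im_mulVec, hFZ]; ext; simp [v]
  obtain ⟨hAu, hAv⟩ := mulVec_eq_zero_of_posSemidef_J_mul hA hB hre him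
  have hBu : F.map im *ᵥ u = r • v := by rw [← him, hAv, zero_add]
  have hBv : F.map im *ᵥ v = -(r • u) := by rw [← hre, hAu, zero_sub, neg_neg]
  have hu := hSing u fun k => (mul_pow_mulVec_eq_zero hAu hAv hBu hBv k).1
  have hv := hSing v fun k => (mul_pow_mulVec_eq_zero hAu hAv hBu hBv k).2
  exact hZ0 (funext fun i => Complex.ext (congrFun hu i) (congrFun hv i))

end Matrix

section Independent

variable {ι K V : Type*} [Field K] [AddCommGroup V] [Module K V] [FiniteDimensional K V]
  {p : ι → Submodule K V}

theorem iSupIndep.finrank_biSup_of_finite (hp : iSupIndep p) {s : Set ι} (hs : s.Finite) :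
    finrank K ↥(⨆ i ∈ s, p i) = ∑ᶠ i ∈ s, finrank K (p i) := by
  induction s, hs using Set.Finite.induction_on with
  | empty => simp
  | @insert a s ha hs ih =>
    have hdisj : Disjoint (p a) (⨆ i ∈ s, p i) := hp.disjoint_biSup ha
    rw [iSup_insert, finsum_mem_insert _ ha hs, ← ih,
      ← Submodule.finrank_sup_add_finrank_inf_eq, hdisj.eq_bot, finrank_bot, add_zero]

theorem iSupIndep.finrank_biSup (hp : iSupIndep p) (s : Set ι) :
    finrank K ↥(⨆ i ∈ s, p i) = ∑ᶠ i ∈ s, finrank K (p i) := by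
  have hsupp : (Function.support fun i => finrank K (p i)) = {i | p i ≠ ⊥} := by
    ext i; simp [Submodule.finrank_eq_zero]
  have hfin : (s ∩ {i | p i ≠ ⊥}).Finite :=
    (WellFoundedGT.finite_ne_bot_of_iSupIndep hp).subset Set.inter_subset_right
  have hsup : (⨆ i ∈ s, p i) = ⨆ i ∈ s ∩ {i | p i ≠ ⊥}, p i := by
    refine le_antisymm (iSup₂_le fun i hi => ?_) (biSup_mono fun _ => And.left)
    by_cases h : p i = ⊥
    · simp [h]
    · exact le_biSup p ⟨hi, h⟩
  rw [hsup, hp.finrank_biSup_of_finite hfin, ← hsupp, finsum_mem_inter_support]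

end Independent

namespace Module.End

section CommRing

variable {R M : Type*} [CommRing R] [AddCommGroup M] [Module R M]

theorem maxGenEigenspace_neg (f : End R M) (μ : R) :
    (-f).maxGenEigenspace μ = f.maxGenEigenspace (-μ) := by
  ext x
  have h : -f - μ • 1 = -(f - (-μ) • 1) := by rw [neg_smul, sub_neg_eq_add, neg_add']
  simp only [mem_maxGenEigenspace, h]
  refine exists_congr fun k => ?_
  rw [neg_pow (f - (-μ) • 1) k]
  rcases neg_one_pow_eq_or (End R M) k with h | h <;> simp [h]

theorem maxGenEigenspace_eq_bot_of_not_hasEigenvalue {f : End R M} {μ : R}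
    (h : ¬ f.HasEigenvalue μ) : f.maxGenEigenspace μ = ⊥ := by
  by_contra h'
  exact h ((hasUnifEigenvalue_iff_hasUnifEigenvalue_one (k := ⊤) (by simp)).1 h')

end CommRing

variable {V : Type*} [AddCommGroup V] [Module ℂ V] [FiniteDimensional ℂ V] (f : End ℂ V)

theorem finrank_iSup_maxGenEigenspace_im_pos_add_im_neg (hf : ∀ r : ℝ, ¬ f.HasEigenvalue r) :
    finrank ℂ ↥(⨆ (μ : ℂ) (_ : 0 < μ.im), f.maxGenEigenspace μ) +
      finrank ℂ ↥(⨆ (μ : ℂ) (_ : μ.im < 0), f.maxGenEigenspace μ) = finrank ℂ V := by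
  have hdisj : Disjoint (⨆ (μ : ℂ) (_ : 0 < μ.im), f.maxGenEigenspace μ)
      (⨆ (μ : ℂ) (_ : μ.im < 0), f.maxGenEigenspace μ) :=
    f.independent_maxGenEigenspace.disjoint_biSup_biSup
      (Set.disjoint_left.2 fun μ (h₁ : 0 < μ.im) (h₂ : μ.im < 0) => h₁.not_gt h₂)
  have hcodisj : Codisjoint (⨆ (μ : ℂ) (_ : 0 < μ.im), f.maxGenEigenspace μ)
      (⨆ (μ : ℂ) (_ : μ.im < 0), f.maxGenEigenspace μ) := by
    rw [codisjoint_iff, eq_top_iff, ← f.iSup_maxGenEigenspace_eq_top]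
    refine iSup_le fun μ => ?_
    rcases lt_trichotomy μ.im 0 with h | h | h
    · exact le_sup_of_le_right (le_biSup _ h)
    · have hμ : (μ.re : ℂ) = μ := Complex.ext rfl (by simp [h])
      rw [maxGenEigenspace_eq_bot_of_not_hasEigenvalue (hμ ▸ hf μ.re)]
      exact bot_le
    · exact le_sup_of_le_left (le_biSup _ h)
  exact Submodule.finrank_add_eq_of_isCompl ⟨hdisj, hcodisj⟩

theorem finrank_iSup_maxGenEigenspace_im_pos_eq_im_neg
    (hf : ∀ μ, finrank ℂ (f.maxGenEigenspace (-μ)) = finrank ℂ (f.maxGenEigenspace μ)) :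
    finrank ℂ ↥(⨆ (μ : ℂ) (_ : 0 < μ.im), f.maxGenEigenspace μ) =
      finrank ℂ ↥(⨆ (μ : ℂ) (_ : μ.im < 0), f.maxGenEigenspace μ) := by
  have hpos : finrank ℂ ↥(⨆ (μ : ℂ) (_ : 0 < μ.im), f.maxGenEigenspace μ) =
      ∑ᶠ μ ∈ {μ : ℂ | 0 < μ.im}, finrank ℂ (f.maxGenEigenspace μ) :=
    f.independent_maxGenEigenspace.finrank_biSup _
  have hneg : finrank ℂ ↥(⨆ (μ : ℂ) (_ : μ.im < 0), f.maxGenEigenspace μ) =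
      ∑ᶠ μ ∈ {μ : ℂ | μ.im < 0}, finrank ℂ (f.maxGenEigenspace μ) :=
    f.independent_maxGenEigenspace.finrank_biSup _
  rw [hpos, hneg]
  refine finsum_mem_eq_of_bijOn Neg.neg ⟨fun μ (h : 0 < μ.im) => ?_, neg_injective.injOn,
    fun μ (h : μ.im < 0) => ⟨-μ, ?_, neg_neg μ⟩⟩ fun μ _ => (hf μ).symm
  · show (-μ).im < 0
    simpa using h
  · show 0 < (-μ).im
    simpa using h

end Module.End

theorem Matrix.finrank_maxGenEigenspace_neg_of_isSymm_J_mul {l K : Type*} [Fintype l]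
    [DecidableEq l] [Field K] {F : Matrix (l ⊕ l) (l ⊕ l) K} (hF : (J l K * F).IsSymm) (μ : K) :
    finrank K (Module.End.maxGenEigenspace F.mulVecLin (-μ)) =
      finrank K (Module.End.maxGenEigenspace F.mulVecLin μ) := by
  have hneg : (-F).mulVecLin = -F.mulVecLin := LinearMap.ext fun x => neg_mulVec x F
  rw [← Module.End.maxGenEigenspace_neg, ← hneg, LinearMap.finrank_maxGenEigenspace_eq,
    LinearMap.finrank_maxGenEigenspace_eq, charpoly_mulVecLin, charpoly_mulVecLin,
    charpoly_neg_of_isSymm_J_mul hF]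

theorem sympForm_eq_dotProduct_J_mulVec {n : ℕ} (X Y : Fin n ⊕ Fin n → ℂ) :
    sympForm n X Y = X ⬝ᵥ J (Fin n) ℂ *ᵥ Y := by
  simp [sympForm, J_mulVec, dotProduct, Fintype.sum_sum_type, mul_comm]
  ring

theorem sympForm_swap {n : ℕ} (X Y : Fin n ⊕ Fin n → ℂ) :
    sympForm n X Y = -sympForm n Y X := by
  simp only [sympForm]
  ring

theorem isSymm_J_mul_of_sympForm {n : ℕ} {F : Matrix (Fin n ⊕ Fin n) (Fin n ⊕ Fin n) ℂ}
    (hF : ∀ X Y, sympForm n X (F *ᵥ Y) = -sympForm n (F *ᵥ X) Y) :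
    (J (Fin n) ℂ * F).IsSymm := by
  refine isSymm_of_dotProduct_mulVec_comm fun X Y => ?_
  rw [← mulVec_mulVec, ← mulVec_mulVec, ← sympForm_eq_dotProduct_J_mulVec,
    ← sympForm_eq_dotProduct_J_mulVec, hF, sympForm_swap, neg_neg]

theorem posSemidef_J_mul_map_re_of_sympForm {n : ℕ}
    {F : Matrix (Fin n ⊕ Fin n) (Fin n ⊕ Fin n) ℂ} (hF : (J (Fin n) ℂ * F).IsSymm)
    (hq : ∀ X : Fin n ⊕ Fin n → ℝ,
      0 ≤ (sympForm n (fun j => (X j : ℂ)) (F *ᵥ fun j => (X j : ℂ))).re) :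
    (J (Fin n) ℝ * F.map re).PosSemidef := by
  refine .of_dotProduct_mulVec_nonneg ?_ fun x => ?_
  · rw [IsHermitian, conjTranspose_eq_transpose_of_trivial, ← map_re_J_mul]
    exact hF.map re
  · rw [star_trivial, ← map_re_J_mul, ← re_ofReal_dotProduct_mulVec_ofReal, ← mulVec_mulVec,
      ← sympForm_eq_dotProduct_J_mulVec]
    exact hq x

theorem stmt1_general (n : ℕ)
    (F : Matrix (Fin n ⊕ Fin n) (Fin n ⊕ Fin n) ℂ)
    (hFskew : ∀ X Y : Fin n ⊕ Fin n → ℂ,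
      sympForm n X (F *ᵥ Y) = - sympForm n (F *ᵥ X) Y)
    (hReq : ∀ X : Fin n ⊕ Fin n → ℝ,
      0 ≤ (sympForm n (fun j => (X j : ℂ)) (F *ᵥ fun j => (X j : ℂ))).re)
    (hSing : ∀ X : Fin n ⊕ Fin n → ℝ,
      (∀ k : ℕ, k ≤ 2 * n - 1 →
        (F.map Complex.re * (F.map Complex.im) ^ k) *ᵥ X = 0) → X = 0) :
    (∀ r : ℝ, ¬ Module.End.HasEigenvalue (Matrix.mulVecLin F) (r : ℂ)) ∧
    (Module.finrank ℂ
        ↥(⨆ (μ : ℂ) (_ : 0 < μ.im), Module.End.maxGenEigenspace (Matrix.mulVecLin F) μ) = n) ∧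
    (Module.finrank ℂ
        ↥(⨆ (μ : ℂ) (_ : μ.im < 0), Module.End.maxGenEigenspace (Matrix.mulVecLin F) μ) = n) := by
  have hF := isSymm_J_mul_of_sympForm hFskew
  have hreal : ∀ r : ℝ, ¬ Module.End.HasEigenvalue F.mulVecLin r :=
    not_hasEigenvalue_ofReal (posSemidef_J_mul_map_re_of_sympForm hF hReq)
      (map_im_J_mul F ▸ hF.map im) fun X hX => hSing X fun k _ => hX k
  have hsum := Module.End.finrank_iSup_maxGenEigenspace_im_pos_add_im_neg _ hreal
  have heq := Module.End.finrank_iSup_maxGenEigenspace_im_pos_eq_im_neg _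
    (finrank_maxGenEigenspace_neg_of_isSymm_J_mul hF)
  have hdim : finrank ℂ (Fin n ⊕ Fin n → ℂ) = 2 * n := by simp [two_mul]
  exact ⟨hreal, by omega, by omega⟩

/-- a Hamilton map of a partially elliptic quadratic form with trivial singular
space has no real eigenvalues, and has exactly `n` eigenvalues (with algebraic multiplicity)
in each of the upper and lower half-planes. -/
theorem stmt1 (n : ℕ) (hn : 1 ≤ n)
    (F : Matrix (Fin n ⊕ Fin n) (Fin n ⊕ Fin n) ℂ)
    (hFskew : ∀ X Y : Fin n ⊕ Fin n → ℂ,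
      sympForm n X (F *ᵥ Y) = - sympForm n (F *ᵥ X) Y)
    (hReq : ∀ X : Fin n ⊕ Fin n → ℝ,
      0 ≤ (sympForm n (fun j => (X j : ℂ)) (F *ᵥ fun j => (X j : ℂ))).re)
    (hSing : ∀ X : Fin n ⊕ Fin n → ℝ,
      (∀ k : ℕ, k ≤ 2 * n - 1 →
        (F.map Complex.re * (F.map Complex.im) ^ k) *ᵥ X = 0) → X = 0) :
    (∀ r : ℝ, ¬ Module.End.HasEigenvalue (Matrix.mulVecLin F) (r : ℂ)) ∧
    (Module.finrank ℂ
        ↥(⨆ (μ : ℂ) (_ : 0 < μ.im), Module.End.maxGenEigenspace (Matrix.mulVecLin F) μ) = n) ∧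
    (Module.finrank ℂ
        ↥(⨆ (μ : ℂ) (_ : μ.im < 0), Module.End.maxGenEigenspace (Matrix.mulVecLin F) μ) = n) :=
  stmt1_general n F hFskew hReq hSing
end

section
/- Let A ∈ ℂ^{n×n} be symmetric (Aᵗ = A) with positive definite imaginary part Im A = (A − A*)/(2i). Then the matrix 1 − iA is invertible, and setting C = (1 − iA)⁻¹(1 + iA) one has the identity 1 − C*C = (1 + iA*)⁻¹ (4 Im A) (1 − iA)⁻¹. Moreover, for any symmetric A with 1 − iA invertible and C = (1 − iA)⁻¹(1 + iA), the Hermitian matrix Im A is positive definite if and only if the Hermitian matrix 1 − C*C is positive definite. -/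
open Matrix Complex
open scoped ComplexOrder

/-!
With `B = 1 − iA` and `P = 1 + iA`, which commute, `C = B⁻¹P = PB⁻¹`, so
`1 − C*C = B*⁻¹ (B*B − P*P) B⁻¹`, and expanding gives `B*B − P*P = 4 Im A`.
Positive definiteness is invariant under the congruence by the invertible `B⁻¹`. Invertibility
of `B` when `Im A > 0` comes from the same identity: if `Bv = 0` with `v ≠ 0`, then
`v*(B*B − P*P)v = −|Pv|² ≤ 0`.
-/

/-- The "imaginary part" `(A − A*)/(2i)` of a complex square matrix. -/
noncomputable def matImagPart {n : ℕ} (A : Matrix (Fin n) (Fin n) ℂ) :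
    Matrix (Fin n) (Fin n) ℂ :=
  ((2 * Complex.I)⁻¹ : ℂ) • (A - Aᴴ)

namespace Matrix

variable {m : Type*}

theorem one_sub_conjTranspose_mul_self_of_inv_mul [Fintype m] [DecidableEq m] {α : Type*}
    [CommRing α] [StarRing α] {B P : Matrix m m α} (hB : IsUnit B) (hBP : Commute B P) :
    1 - (B⁻¹ * P)ᴴ * (B⁻¹ * P) = Bᴴ⁻¹ * (Bᴴ * B - Pᴴ * P) * B⁻¹ := by
  have := hB.invertible
  have hPB : B⁻¹ * P = P * B⁻¹ := by
    rw [← invOf_eq_nonsing_inv]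
    exact hBP.invOf_left.eq
  have hBH : IsUnit Bᴴ.det := (isUnit_iff_isUnit_det _).mp ((isUnit_conjTranspose B).mpr hB)
  rw [hPB, conjTranspose_mul, conjTranspose_nonsing_inv, mul_sub, sub_mul]
  simp only [Matrix.mul_assoc, mul_inv_of_invertible, nonsing_inv_mul_cancel_left _ _ hBH]

theorem isUnit_of_posDef_conjTranspose_mul_self_sub [Fintype m] [DecidableEq m] {K : Type*}
    [Field K] [PartialOrder K] [StarRing K] [StarOrderedRing K] {B P : Matrix m m K}
    (h : (Bᴴ * B - Pᴴ * P).PosDef) : IsUnit B := by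
  rw [isUnit_iff_isUnit_det, isUnit_iff_ne_zero]
  intro hdet
  obtain ⟨v, hv, hBv⟩ := exists_mulVec_eq_zero_iff.mpr hdet
  have hpos := h.dotProduct_mulVec_pos hv
  rw [sub_mulVec, dotProduct_sub, ← mulVec_mulVec, ← mulVec_mulVec,
    dotProduct_mulVec (star v) Bᴴ, dotProduct_mulVec (star v) Pᴴ, ← star_mulVec, ← star_mulVec,
    hBv, star_zero, zero_dotProduct, zero_sub, neg_pos] at hpos
  exact (dotProduct_star_self_nonneg _).not_gt hpos

theorem posDef_smul_iff [Fintype m] {𝕜 : Type*} [RCLike 𝕜] {M : Matrix m m 𝕜} {c : 𝕜}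
    (hc : 0 < c) : (c • M).PosDef ↔ M.PosDef := by
  refine ⟨fun h => ?_, fun h => h.smul hc⟩
  simpa [smul_smul, inv_mul_cancel₀ hc.ne'] using h.smul (RCLike.inv_pos_of_pos hc)

end Matrix

section CayleyTransform

variable {n : ℕ} (A : Matrix (Fin n) (Fin n) ℂ)

theorem conjTranspose_one_sub_I_smul : (1 - I • A)ᴴ = 1 + I • Aᴴ := by
  simp [sub_eq_add_neg]

theorem conjTranspose_one_add_I_smul : (1 + I • A)ᴴ = 1 - I • Aᴴ := by
  simp [sub_eq_add_neg]

theorem commute_one_sub_I_smul_one_add_I_smul : Commute (1 - I • A) (1 + I • A) :=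
  (Commute.one_right _).add_right ((Commute.one_left _).sub_left (Commute.refl _))

theorem conjTranspose_mul_self_sub_eq_four_smul_matImagPart :
    (1 - I • A)ᴴ * (1 - I • A) - (1 + I • A)ᴴ * (1 + I • A) = (4 : ℂ) • matImagPart A := by
  have hc : (4 : ℂ) * (2 * I)⁻¹ = -(2 * I) := by
    field_simp
    linear_combination (4 : ℂ) * I_sq
  rw [conjTranspose_one_sub_I_smul, conjTranspose_one_add_I_smul, matImagPart, smul_smul, hc]
  simp only [mul_sub, sub_mul, mul_add, add_mul, one_mul, mul_one, Matrix.smul_mul,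
    Matrix.mul_smul, smul_smul, smul_sub]
  module

theorem one_sub_cayley_conjTranspose_mul_self (hB : IsUnit (1 - I • A)) :
    1 - ((1 - I • A)⁻¹ * (1 + I • A))ᴴ * ((1 - I • A)⁻¹ * (1 + I • A)) =
      (1 + I • Aᴴ)⁻¹ * ((4 : ℂ) • matImagPart A) * (1 - I • A)⁻¹ := by
  rw [one_sub_conjTranspose_mul_self_of_inv_mul hB (commute_one_sub_I_smul_one_add_I_smul A),
    conjTranspose_mul_self_sub_eq_four_smul_matImagPart, conjTranspose_one_sub_I_smul]

end CayleyTransform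

/-- for symmetric `A` with positive definite imaginary part, `1 − iA` is
invertible and, with `C = (1 − iA)⁻¹(1 + iA)`, one has
`1 − C*C = (1 + iA*)⁻¹ (4 Im A) (1 − iA)⁻¹`; moreover for any symmetric `A` with `1 − iA`
invertible, `Im A` is positive definite iff `1 − C*C` is positive definite. -/
theorem stmt2 (n : ℕ) :
    (∀ A : Matrix (Fin n) (Fin n) ℂ, Aᵀ = A → (matImagPart A).PosDef →
      IsUnit (1 - Complex.I • A) ∧
        (1 - ((1 - Complex.I • A)⁻¹ * (1 + Complex.I • A))ᴴ *
              ((1 - Complex.I • A)⁻¹ * (1 + Complex.I • A)) =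
          (1 + Complex.I • Aᴴ)⁻¹ * ((4 : ℂ) • matImagPart A) * (1 - Complex.I • A)⁻¹)) ∧
    (∀ A : Matrix (Fin n) (Fin n) ℂ, Aᵀ = A → IsUnit (1 - Complex.I • A) →
      ((matImagPart A).PosDef ↔
        (1 - ((1 - Complex.I • A)⁻¹ * (1 + Complex.I • A))ᴴ *
              ((1 - Complex.I • A)⁻¹ * (1 + Complex.I • A))).PosDef)) := by
  have four_pos : (0 : ℂ) < 4 := by norm_num
  refine ⟨fun A _ hA => ?_, fun A _ hB => ?_⟩
  · have hB : IsUnit (1 - I • A) := isUnit_of_posDef_conjTranspose_mul_self_sub <| by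
      rw [conjTranspose_mul_self_sub_eq_four_smul_matImagPart]
      exact hA.smul four_pos
    exact ⟨hB, one_sub_cayley_conjTranspose_mul_self A hB⟩
  · rw [one_sub_cayley_conjTranspose_mul_self A hB, ← conjTranspose_one_sub_I_smul,
      ← conjTranspose_nonsing_inv, ← star_eq_conjTranspose,
      IsUnit.posDef_star_left_conjugate_iff (isUnit_nonsing_inv_iff.mpr hB),
      posDef_smul_iff four_pos]
end

section
/- Let C ∈ ℂ^{n×n} be symmetric (Cᵗ = C) and define Φ₁ : ℂⁿ → ℝ by Φ₁(x) = (1/4)(‖x‖² − Re(x · Cx)), where ‖x‖² = Σ_j |x_j|² and x · Cx = Σ_j x_j (Cx)_j is the bilinear dot product. Then Φ₁(x) > 0 for all x ∈ ℂⁿ \ {0} if and only if the Hermitian matrix 1 − C*C is positive definite (equivalently, all singular values of C lie in [0,1)). -/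
/-!
Positive definiteness of `1 - Cᴴ * C` says `‖C x‖ < ‖x‖` for `x ≠ 0`, and `Φ₁(x) > 0` says
`Re (x ⬝ᵥ C x) < ‖x‖²`. The first gives the second by Cauchy–Schwarz. Conversely, replacing `x` by
`c • x` with `‖c‖ = 1` multiplies `x ⬝ᵥ C x` by `c²`, so the bound on the real part is a bound
`‖x ⬝ᵥ C x‖ < ‖x‖²` on the modulus. As `C` is symmetric, `x ⬝ᵥ C x` is the quadratic form of
a symmetric bilinear form; polarizing at `y = star (C x)`, for which `y ⬝ᵥ C x = ‖C x‖²`, and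
using the parallelogram law gives `4 ‖C x‖² < ‖y + x‖² + ‖y - x‖² = 2 ‖C x‖² + 2 ‖x‖²`.
-/

open Matrix Complex
open scoped ComplexOrder

/-- The weight `Φ₁(x) = (1/4)(‖x‖² − Re(x · Cx))` on `ℂⁿ`, with the bilinear dot product. -/
noncomputable def PhiOne (n : ℕ) (C : Matrix (Fin n) (Fin n) ℂ) (x : Fin n → ℂ) : ℝ :=
  (1 / 4) * ((∑ j, ‖x j‖ ^ 2) - (x ⬝ᵥ (C *ᵥ x)).re)

open WithLp

section Symmetric

variable {R ι : Type*} [CommRing R] [Fintype ι] {C : Matrix ι ι R}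

lemma dotProduct_mulVec_comm (hC : Cᵀ = C) (y z : ι → R) :
    y ⬝ᵥ (C *ᵥ z) = z ⬝ᵥ (C *ᵥ y) := by
  rw [dotProduct_mulVec, ← hC, vecMul_transpose, hC, dotProduct_comm]

lemma dotProduct_mulVec_polarization (hC : Cᵀ = C) (y z : ι → R) :
    (y + z) ⬝ᵥ (C *ᵥ (y + z)) - (y - z) ⬝ᵥ (C *ᵥ (y - z)) = 4 * (y ⬝ᵥ (C *ᵥ z)) := by
  simp only [mulVec_add, mulVec_sub, dotProduct_add, dotProduct_sub, add_dotProduct,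
    sub_dotProduct, dotProduct_mulVec_comm hC z y]
  ring

end Symmetric

section RCLike

variable {𝕜 ι κ : Type*} [RCLike 𝕜] [Fintype ι] [Fintype κ]

lemma norm_toLp_star (x : ι → 𝕜) : ‖toLp 2 (star x)‖ = ‖toLp 2 x‖ := by
  simp only [EuclideanSpace.norm_eq, Pi.star_apply, norm_star]

lemma norm_dotProduct_le (x y : ι → 𝕜) : ‖x ⬝ᵥ y‖ ≤ ‖toLp 2 x‖ * ‖toLp 2 y‖ := by
  have h : x ⬝ᵥ y = inner 𝕜 (toLp 2 (star y)) (toLp 2 x) := by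
    rw [EuclideanSpace.inner_toLp_toLp, star_star]
  rw [h, mul_comm, ← norm_toLp_star y]
  exact norm_inner_le_norm _ _

lemma star_dotProduct_self_eq_norm_sq (x : ι → 𝕜) :
    star x ⬝ᵥ x = ((‖toLp 2 x‖ ^ 2 : ℝ) : 𝕜) := by
  rw [dotProduct_comm, ← EuclideanSpace.inner_toLp_toLp, inner_self_eq_norm_sq_to_K,
    RCLike.ofReal_pow]

lemma re_dotProduct_mulVec_self_lt_of_norm_mulVec_lt {C : Matrix ι ι 𝕜} {x : ι → 𝕜}
    (h : ‖toLp 2 (C *ᵥ x)‖ < ‖toLp 2 x‖) : RCLike.re (x ⬝ᵥ (C *ᵥ x)) < ‖toLp 2 x‖ ^ 2 := by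
  have hx : 0 < ‖toLp 2 x‖ := (norm_nonneg _).trans_lt h
  calc RCLike.re (x ⬝ᵥ (C *ᵥ x)) ≤ ‖x ⬝ᵥ (C *ᵥ x)‖ := RCLike.re_le_norm _
    _ ≤ ‖toLp 2 x‖ * ‖toLp 2 (C *ᵥ x)‖ := norm_dotProduct_le _ _
    _ < ‖toLp 2 x‖ ^ 2 := by rw [sq]; exact mul_lt_mul_of_pos_left h hx

theorem posDef_one_sub_conjTranspose_mul_self_iff [DecidableEq ι] (C : Matrix κ ι 𝕜) :
    (1 - Cᴴ * C).PosDef ↔ ∀ x : ι → 𝕜, x ≠ 0 → ‖toLp 2 (C *ᵥ x)‖ < ‖toLp 2 x‖ := by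
  have hquad (x : ι → 𝕜) : star x ⬝ᵥ ((1 - Cᴴ * C) *ᵥ x) =
      ((‖toLp 2 x‖ ^ 2 - ‖toLp 2 (C *ᵥ x)‖ ^ 2 : ℝ) : 𝕜) := by
    rw [sub_mulVec, one_mulVec, dotProduct_sub, ← mulVec_mulVec, dotProduct_mulVec,
      ← star_mulVec, star_dotProduct_self_eq_norm_sq, star_dotProduct_self_eq_norm_sq,
      RCLike.ofReal_sub]
  have hherm : (1 - Cᴴ * C).IsHermitian :=
    isHermitian_one.sub (isHermitian_conjTranspose_mul_self C)
  simp only [posDef_iff_dotProduct_mulVec, hherm, true_and, hquad, RCLike.ofReal_pos, sub_pos,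
    sq_lt_sq₀ (norm_nonneg _) (norm_nonneg _)]

lemma norm_mulVec_lt_of_norm_dotProduct_mulVec_self_lt {C : Matrix ι ι 𝕜} (hC : Cᵀ = C)
    (h : ∀ w : ι → 𝕜, w ≠ 0 → ‖w ⬝ᵥ (C *ᵥ w)‖ < ‖toLp 2 w‖ ^ 2) {x : ι → 𝕜} (hx : x ≠ 0) :
    ‖toLp 2 (C *ᵥ x)‖ < ‖toLp 2 x‖ := by
  set y := star (C *ᵥ x)
  have hle (w : ι → 𝕜) : ‖w ⬝ᵥ (C *ᵥ w)‖ ≤ ‖toLp 2 w‖ ^ 2 := by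
    rcases eq_or_ne w 0 with rfl | hw
    · simp
    · exact (h w hw).le
  have hsum : ‖(y + x) ⬝ᵥ (C *ᵥ (y + x))‖ + ‖(y - x) ⬝ᵥ (C *ᵥ (y - x))‖ <
      ‖toLp 2 (y + x)‖ ^ 2 + ‖toLp 2 (y - x)‖ ^ 2 := by
    rcases eq_or_ne (y + x) 0 with hp | hp
    · have hm : y - x ≠ 0 := by
        rw [eq_neg_of_add_eq_zero_left hp]
        simpa [sub_eq_add_neg, ← two_smul 𝕜] using hx
      exact add_lt_add_of_le_of_lt (hle _) (h _ hm)
    · exact add_lt_add_of_lt_of_le (h _ hp) (hle _)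
  have hpolar : 4 * ‖toLp 2 (C *ᵥ x)‖ ^ 2 ≤
      ‖(y + x) ⬝ᵥ (C *ᵥ (y + x))‖ + ‖(y - x) ⬝ᵥ (C *ᵥ (y - x))‖ :=
    calc 4 * ‖toLp 2 (C *ᵥ x)‖ ^ 2
        = ‖(y + x) ⬝ᵥ (C *ᵥ (y + x)) - (y - x) ⬝ᵥ (C *ᵥ (y - x))‖ := by
          rw [dotProduct_mulVec_polarization hC, star_dotProduct_self_eq_norm_sq]
          simp
      _ ≤ _ := norm_sub_le _ _
  have hpar := parallelogram_law_with_norm 𝕜 (toLp 2 y) (toLp 2 x)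
  rw [norm_toLp_star] at hpar
  rw [toLp_add, toLp_sub] at hsum
  have hsq : ‖toLp 2 (C *ᵥ x)‖ ^ 2 < ‖toLp 2 x‖ ^ 2 := by nlinarith
  exact lt_of_pow_lt_pow_left₀ 2 (norm_nonneg _) hsq

end RCLike

lemma Complex.exists_norm_eq_one_sq_mul_eq_norm (d : ℂ) : ∃ c : ℂ, ‖c‖ = 1 ∧ c ^ 2 * d = ‖d‖ := by
  refine ⟨exp (↑(-(arg d / 2)) * I), norm_exp_ofReal_mul_I _, ?_⟩
  calc exp (↑(-(arg d / 2)) * I) ^ 2 * d = exp (-(arg d * I)) * (‖d‖ * exp (arg d * I)) := by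
        rw [← exp_nat_mul, norm_mul_exp_arg_mul_I]
        push_cast
        ring_nf
    _ = ‖d‖ := by rw [mul_left_comm, ← exp_add, neg_add_cancel, exp_zero, mul_one]

lemma norm_dotProduct_mulVec_self_lt_of_re_lt {ι : Type*} [Fintype ι] {C : Matrix ι ι ℂ}
    (h : ∀ w : ι → ℂ, w ≠ 0 → (w ⬝ᵥ (C *ᵥ w)).re < ‖toLp 2 w‖ ^ 2) {w : ι → ℂ} (hw : w ≠ 0) :
    ‖w ⬝ᵥ (C *ᵥ w)‖ < ‖toLp 2 w‖ ^ 2 := by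
  obtain ⟨c, hc, hcd⟩ := exists_norm_eq_one_sq_mul_eq_norm (w ⬝ᵥ (C *ᵥ w))
  have hrot : (c • w) ⬝ᵥ (C *ᵥ (c • w)) = ‖w ⬝ᵥ (C *ᵥ w)‖ := by
    rw [mulVec_smul, dotProduct_smul, smul_dotProduct, smul_eq_mul, smul_eq_mul, ← mul_assoc,
      ← sq, hcd]
  have hcw : c • w ≠ 0 := smul_ne_zero (norm_ne_zero_iff.mp (hc ▸ one_ne_zero)) hw
  simpa [hrot, toLp_smul, norm_smul, hc] using h (c • w) hcw

lemma phiOne_pos_iff {n : ℕ} (C : Matrix (Fin n) (Fin n) ℂ) (x : Fin n → ℂ) :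
    0 < PhiOne n C x ↔ (x ⬝ᵥ (C *ᵥ x)).re < ‖toLp 2 x‖ ^ 2 := by
  rw [PhiOne, EuclideanSpace.norm_sq_eq, mul_pos_iff_of_pos_left (by norm_num), sub_pos]

/-- for symmetric `C`, strict positivity of `Φ₁` off the origin is equivalent
to positive definiteness of `1 − C*C`. -/
theorem stmt3 (n : ℕ) (C : Matrix (Fin n) (Fin n) ℂ) (hC : Cᵀ = C) :
    (∀ x : Fin n → ℂ, x ≠ 0 → 0 < PhiOne n C x) ↔ (1 - Cᴴ * C).PosDef := by
  simp only [posDef_one_sub_conjTranspose_mul_self_iff, phiOne_pos_iff]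
  refine ⟨fun h x hx ↦ ?_, fun h x hx ↦ re_dotProduct_mulVec_self_lt_of_norm_mulVec_lt (h x hx)⟩
  exact norm_mulVec_lt_of_norm_dotProduct_mulVec_self_lt hC
    (fun w hw ↦ norm_dotProduct_mulVec_self_lt_of_re_lt h hw) hx
end

section
/- Let N ≥ 1 and let A ∈ ℂ^{N×N} be upper triangular (A_{jk} = 0 whenever j > k) and Jordan-like in the sense that A_{jk} ≠ 0 implies A_{jj} = A_{kk}. Let z ∈ ℂ and ε > 0 be such that |A_{jj} − z| > ε for every j with A_{jj} ≠ z. Then (2πi)⁻¹ ∮_{|λ−z|=ε} (λ·1 − A)⁻¹ dλ = D, where D is the diagonal matrix with D_{jj} = 1 if A_{jj} = z and D_{jj} = 0 otherwise, and the contour integral is the counterclockwise circle integral of the matrix-valued resolvent (which is defined for every λ on the circle since the eigenvalues of an upper triangular matrix are its diagonal entries). -/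
/-!
Write `A = D + B` with `D` the diagonal of `A`. Then `B` is strictly upper triangular, hence
nilpotent, and the Jordan-like condition makes `B` commute with every function of `D`. Off the
diagonal entries the resolvent is therefore the finite Neumann series
`(λ - A)⁻¹ = ∑_{m < N} (λ - D)^{-(m+1)} B^m`, whose `(i, j)` entry is
`∑_{m < N} (B ^ m) i j (λ - A i i)^{-(m+1)}`. Only the simple pole has a nonzero circle integral,
equal to `2πi` if `A i i` lies inside the circle, i.e. if `A i i = z`, and its coefficient is
`(B ^ 0) i j = δ i j`.
-/

open Matrix Complex Finset Metric

theorem sub_mul_sum_pow_succ_mul_pow_eq_one {R : Type*} [Ring R] {a e n : R} {k : ℕ}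
    (hae : a * e = 1) (hen : Commute e n) (hn : n ^ k = 0) :
    (a - n) * ∑ m ∈ range k, e ^ (m + 1) * n ^ m = 1 := by
  have hsum : ∑ m ∈ range k, e ^ (m + 1) * n ^ m = e * ∑ m ∈ range k, (e * n) ^ m := by
    rw [mul_sum]
    refine sum_congr rfl fun m _ => ?_
    rw [hen.mul_pow, pow_succ', mul_assoc]
  rw [hsum, ← mul_assoc, sub_mul, hae, ← hen.eq, mul_neg_geom_sum, hen.mul_pow, hn, mul_zero,
    sub_zero]

namespace Matrix

variable {ι : Type*} [Fintype ι] [DecidableEq ι]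

theorem commute_diagonal_of_apply_ne_zero {α : Type*} [CommSemiring α] {v : ι → α}
    {B : Matrix ι ι α} (h : ∀ p q, B p q ≠ 0 → v p = v q) : Commute (diagonal v) B := by
  ext p q
  rw [diagonal_mul, mul_diagonal]
  by_cases hpq : B p q = 0
  · simp [hpq]
  · rw [h p q hpq, mul_comm]

theorem pow_card_eq_zero_of_isUpperTriangular {R : Type*} [CommRing R] [LinearOrder ι]
    {M : Matrix ι ι R} (hM : M.IsUpperTriangular) (hdiag : ∀ i, M i i = 0) :
    M ^ Fintype.card ι = 0 := by
  simpa [charpoly_of_isUpperTriangular M hM, hdiag] using aeval_self_charpoly M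

theorem inv_smul_one_sub_diagonal_add_apply {K : Type*} [Field K] {d : ι → K}
    {B : Matrix ι ι K} {k : ℕ} (hB : ∀ p q, B p q ≠ 0 → d p = d q) (hBk : B ^ k = 0) {t : K}
    (ht : ∀ p, t ≠ d p) (i j : ι) :
    (t • (1 : Matrix ι ι K) - (diagonal d + B))⁻¹ i j =
      ∑ m ∈ range k, (B ^ m) i j * (t - d i)⁻¹ ^ (m + 1) := by
  set e := diagonal fun p => (t - d p)⁻¹
  have hsplit : t • (1 : Matrix ι ι K) - (diagonal d + B) = diagonal (fun p => t - d p) - B := by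
    rw [smul_one_eq_diagonal, ← sub_sub, diagonal_sub]
  have hae : diagonal (fun p => t - d p) * e = 1 := by
    rw [diagonal_mul_diagonal, ← diagonal_one]
    congr 1
    funext p
    exact mul_inv_cancel₀ (sub_ne_zero.2 (ht p))
  have hcomm : Commute e B := commute_diagonal_of_apply_ne_zero fun p q h => by rw [hB p q h]
  rw [hsplit, inv_eq_right_inv (sub_mul_sum_pow_succ_mul_pow_eq_one hae hcomm hBk), sum_apply]
  simp only [e, diagonal_pow, diagonal_mul, Pi.pow_apply]
  exact sum_congr rfl fun m _ => mul_comm _ _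

end Matrix

theorem circleIntegral_sub_inv_of_lt_dist {c w : ℂ} {R : ℝ} (hR : 0 ≤ R) (hw : R < dist w c) :
    (∮ z in C(c, R), (z - w)⁻¹) = 0 := by
  refine DiffContOnCl.circleIntegral_eq_zero hR ?_
  refine ((differentiableOn_id.sub_const w).inv fun z hz => sub_ne_zero.2 hz).diffContOnCl_ball
    fun z hz hzw => ?_
  subst hzw
  exact (mem_closedBall.1 hz).not_gt hw

theorem circleIntegral_sum_mul_sub_inv_pow_succ {c w : ℂ} {R : ℝ} (hw : w ∉ sphere c |R|)
    (b : ℕ → ℂ) (k : ℕ) :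
    (∮ z in C(c, R), ∑ m ∈ range (k + 1), b m * (z - w)⁻¹ ^ (m + 1)) =
      b 0 * ∮ z in C(c, R), (z - w)⁻¹ := by
  have hzpow : ∀ (m : ℕ) (z : ℂ), (z - w)⁻¹ ^ (m + 1) = (z - w) ^ (-(m + 1 : ℤ)) := by
    intro m z
    rw [_root_.zpow_neg, inv_pow]
    norm_cast
  have hint : ∀ m ∈ range (k + 1),
      CircleIntegrable (fun z => b m * (z - w)⁻¹ ^ (m + 1)) c R := fun m _ => by
    simp_rw [hzpow]
    exact (circleIntegrable_sub_zpow_iff.2 (Or.inr (Or.inr hw))).const_fun_smul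
  rw [circleIntegral.integral_fun_sum hint, sum_range_succ', sum_eq_zero, zero_add]
  · simp
  · intro m _
    rw [circleIntegral.integral_const_mul]
    simp_rw [hzpow]
    rw [circleIntegral.integral_sub_zpow_of_ne (by omega), mul_zero]

theorem stmt6_general (N : ℕ) (A : Matrix (Fin N) (Fin N) ℂ)
    (hupper : ∀ j k : Fin N, k < j → A j k = 0)
    (hjordan : ∀ j k : Fin N, A j k ≠ 0 → A j j = A k k)
    (z : ℂ) (ε : ℝ) (hε : 0 < ε)
    (hfar : ∀ j : Fin N, A j j ≠ z → ε < ‖A j j - z‖) :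
    ∀ i j : Fin N,
      (2 * Real.pi * Complex.I : ℂ)⁻¹ *
          circleIntegral
            (fun lam => ((lam • (1 : Matrix (Fin N) (Fin N) ℂ) - A)⁻¹) i j) z ε =
        if i = j ∧ A i i = z then 1 else 0 := by
  intro i j
  set d : Fin N → ℂ := fun k => A k k
  set B := A - diagonal d
  have hB_nilpotent : B ^ N = 0 := by
    have hB_upper : B.IsUpperTriangular :=
      BlockTriangular.sub hupper (blockTriangular_diagonal d)
    simpa using pow_card_eq_zero_of_isUpperTriangular hB_upper fun p => by simp [B, d]
  have hB_jordan : ∀ p q, B p q ≠ 0 → d p = d q := fun p q h => by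
    rcases eq_or_ne p q with rfl | hpq
    · rfl
    · exact hjordan p q (by simpa [B, diagonal_apply_ne _ hpq] using h)
  have hd_sphere : ∀ p, d p ∉ sphere z ε := fun p hp => by
    rw [mem_sphere_iff_norm] at hp
    rcases eq_or_ne (d p) z with hpz | hpz
    · rw [hpz, sub_self, norm_zero] at hp
      exact hε.ne hp
    · exact (hfar p hpz).ne' hp
  have hresolvent : ∀ t ∈ sphere z ε, (t • (1 : Matrix (Fin N) (Fin N) ℂ) - A)⁻¹ i j =
      ∑ m ∈ range N, (B ^ m) i j * (t - d i)⁻¹ ^ (m + 1) := fun t ht => by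
    simpa [B] using inv_smul_one_sub_diagonal_add_apply hB_jordan hB_nilpotent
      (fun p htp => hd_sphere p (htp ▸ ht)) i j
  obtain ⟨k, rfl⟩ := Nat.exists_eq_succ_of_ne_zero (Fin.pos i).ne'
  rw [circleIntegral.integral_congr hε.le hresolvent,
    circleIntegral_sum_mul_sub_inv_pow_succ (by rw [abs_of_pos hε]; exact hd_sphere i), pow_zero]
  rcases eq_or_ne (A i i) z with hiz | hiz
  · rw [show d i = z from hiz, circleIntegral.integral_sub_center_inv z hε.ne',
      mul_comm, mul_assoc, mul_inv_cancel₀ two_pi_I_ne_zero]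
    simp [one_apply, hiz]
  · rw [circleIntegral_sub_inv_of_lt_dist hε.le (by rw [dist_eq_norm]; exact hfar i hiz)]
    simp [hiz]

/-- the Riesz projection of an upper-triangular "Jordan-like" matrix `A`
for the eigenvalue `z` is the diagonal 0-1 matrix picking out the indices `j` with
`A j j = z`. The contour integral of the matrix resolvent is taken entrywise. -/
theorem stmt6 (N : ℕ) (hN : 1 ≤ N) (A : Matrix (Fin N) (Fin N) ℂ)
    (hupper : ∀ j k : Fin N, k < j → A j k = 0)
    (hjordan : ∀ j k : Fin N, A j k ≠ 0 → A j j = A k k)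
    (z : ℂ) (ε : ℝ) (hε : 0 < ε)
    (hfar : ∀ j : Fin N, A j j ≠ z → ε < ‖A j j - z‖) :
    ∀ i j : Fin N,
      (2 * Real.pi * Complex.I : ℂ)⁻¹ *
          circleIntegral
            (fun lam => ((lam • (1 : Matrix (Fin N) (Fin N) ℂ) - A)⁻¹) i j) z ε =
        if i = j ∧ A i i = z then 1 else 0 :=
  stmt6_general N A hupper hjordan z ε hε hfar
end

section
/- Let n ≥ 1, C > 0, h > 0, K > 0, and let α ∈ ℕⁿ be a multi-index. Then ∫_{{x ∈ ℂⁿ : ‖x‖ > K}} (∏_{j=1}^n |x_j|^{2α_j}) exp(−(2C/h)‖x‖²) dL(x) ≤ n · exp(−CK²/(nh)) · (h/C)^{n+|α|} · πⁿ · α!, where dL is Lebesgue measure on ℂⁿ ≅ ℝ^{2n}, ‖x‖² = Σ_j |x_j|², α! = ∏_j α_j!, and |α| = Σ_j α_j. -/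
/-!
Write the weight as `exp (-2c‖x‖²) = exp (-c‖x‖²) · exp (-c‖x‖²)` with `c = C/h`. On `‖x‖ > K` one
factor is at most `exp (-cK²) ≤ n · exp (-cK²/n)`; the integral of what remains over all of `ℂⁿ`
factors by Fubini into one-dimensional moments `∫_ℂ |z|^{2a} exp (-c|z|²) = π a! / c^{a+1}`,
which are Gamma integrals in polar coordinates.
-/

open MeasureTheory Real Finset
open scoped Nat

lemma Complex.integral_norm_pow_mul_exp_neg_mul_sq (a : ℕ) {c : ℝ} (hc : 0 < c) :
    ∫ z : ℂ, ‖z‖ ^ (2 * a) * rexp (-c * ‖z‖ ^ 2) = π * a ! / c ^ (a + 1) := by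
  have h := Complex.integral_rpow_mul_exp_neg_mul_rpow (p := 2) (q := (2 * a : ℕ)) one_le_two
    (by linarith [(2 * a).cast_nonneg (α := ℝ)]) hc
  have hq : (((2 * a : ℕ) : ℝ) + 2) / 2 = a + 1 := by push_cast; ring
  simp_rw [Real.rpow_natCast, Real.rpow_two] at h
  rw [h, neg_div, hq, Real.Gamma_nat_eq_factorial, ← Nat.cast_add_one, Real.rpow_neg hc.le,
    Real.rpow_natCast]
  field_simp

lemma Complex.integrable_norm_pow_mul_exp_neg_mul_sq (a : ℕ) {c : ℝ} (hc : 0 < c) :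
    Integrable fun z : ℂ => ‖z‖ ^ (2 * a) * rexp (-c * ‖z‖ ^ 2) :=
  .of_integral_ne_zero <| by
    rw [Complex.integral_norm_pow_mul_exp_neg_mul_sq a hc]; positivity

section Moments

variable {ι : Type*} [Fintype ι] (α : ι → ℕ)

lemma prod_norm_pow_mul_exp_neg_mul_sum_sq (c : ℝ) (x : ι → ℂ) :
    (∏ j, ‖x j‖ ^ (2 * α j)) * rexp (-c * ∑ j, ‖x j‖ ^ 2) =
      ∏ j, ‖x j‖ ^ (2 * α j) * rexp (-c * ‖x j‖ ^ 2) := by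
  rw [mul_sum, Real.exp_sum, prod_mul_distrib]

lemma integrable_prod_norm_pow_mul_exp_neg_mul_sum_sq {c : ℝ} (hc : 0 < c) :
    Integrable fun x : ι → ℂ => (∏ j, ‖x j‖ ^ (2 * α j)) * rexp (-c * ∑ j, ‖x j‖ ^ 2) := by
  simp_rw [prod_norm_pow_mul_exp_neg_mul_sum_sq]
  exact .fintype_prod fun j => Complex.integrable_norm_pow_mul_exp_neg_mul_sq (α j) hc

lemma integral_prod_norm_pow_mul_exp_neg_mul_sum_sq {c : ℝ} (hc : 0 < c) :
    ∫ x : ι → ℂ, (∏ j, ‖x j‖ ^ (2 * α j)) * rexp (-c * ∑ j, ‖x j‖ ^ 2) =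
      π ^ Fintype.card ι * (∏ j, ((α j) ! : ℝ)) / c ^ (Fintype.card ι + ∑ j, α j) := by
  simp_rw [prod_norm_pow_mul_exp_neg_mul_sum_sq]
  rw [integral_fintype_prod_volume_eq_prod
    (fun j (z : ℂ) => ‖z‖ ^ (2 * α j) * rexp (-c * ‖z‖ ^ 2))]
  simp_rw [Complex.integral_norm_pow_mul_exp_neg_mul_sq _ hc]
  rw [prod_div_distrib, prod_mul_distrib, prod_const, prod_pow_eq_pow_sum, Finset.card_univ,
    sum_add_distrib, sum_const, Finset.card_univ, smul_eq_mul, mul_one, add_comm (∑ j, α j)]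

lemma setIntegral_norm_gt_prod_norm_pow_mul_exp_le {c K : ℝ} (hc : 0 < c) (hK : 0 ≤ K) :
    ∫ x in {x : ι → ℂ | K < √(∑ j, ‖x j‖ ^ 2)},
        (∏ j, ‖x j‖ ^ (2 * α j)) * rexp (-(2 * c) * ∑ j, ‖x j‖ ^ 2) ≤
      rexp (-c * K ^ 2) *
        ∫ x : ι → ℂ, (∏ j, ‖x j‖ ^ (2 * α j)) * rexp (-c * ∑ j, ‖x j‖ ^ 2) := by
  set P : (ι → ℂ) → ℝ := fun x => ∏ j, ‖x j‖ ^ (2 * α j)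
  set S : (ι → ℂ) → ℝ := fun x => ∑ j, ‖x j‖ ^ 2
  have hS : Measurable S := by fun_prop
  have hT : MeasurableSet {x | K < √(S x)} := measurableSet_lt measurable_const hS.sqrt
  have hPS : Integrable fun x => P x * rexp (-c * S x) :=
    integrable_prod_norm_pow_mul_exp_neg_mul_sum_sq α hc
  have hpoint : ∀ x ∈ {x | K < √(S x)},
      P x * rexp (-(2 * c) * S x) ≤ rexp (-c * K ^ 2) * (P x * rexp (-c * S x)) := by
    intro x hx
    have hK2 : K ^ 2 < S x := (lt_sqrt hK).1 hx
    have : rexp (-c * S x) ≤ rexp (-c * K ^ 2) := Real.exp_le_exp.2 (by nlinarith)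
    calc P x * rexp (-(2 * c) * S x) = P x * rexp (-c * S x) * rexp (-c * S x) := by
          rw [mul_assoc, ← Real.exp_add]; ring_nf
      _ ≤ P x * rexp (-c * S x) * rexp (-c * K ^ 2) := by gcongr
      _ = _ := by ring
  calc ∫ x in {x | K < √(S x)}, P x * rexp (-(2 * c) * S x)
      ≤ ∫ x in {x | K < √(S x)}, rexp (-c * K ^ 2) * (P x * rexp (-c * S x)) :=
        setIntegral_mono_on
          (integrable_prod_norm_pow_mul_exp_neg_mul_sum_sq α (by positivity)).integrableOn
          (hPS.const_mul _).integrableOn hT hpoint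
    _ ≤ ∫ x, rexp (-c * K ^ 2) * (P x * rexp (-c * S x)) :=
        setIntegral_le_integral (hPS.const_mul _) (.of_forall fun x => by positivity)
    _ = _ := integral_const_mul _ _

end Moments

/-- the tail bound
`∫_{‖x‖>K} ∏ |x_j|^{2α_j} exp(−(2C/h)‖x‖²) dL(x) ≤ n e^{−CK²/(nh)} (h/C)^{n+|α|} πⁿ α!`. -/
theorem stmt8 (n : ℕ) (hn : 1 ≤ n) (C h K : ℝ) (hC : 0 < C) (hh : 0 < h) (hK : 0 < K)
    (α : Fin n → ℕ) :
    (∫ x in {x : Fin n → ℂ | K < Real.sqrt (∑ j, ‖x j‖ ^ 2)},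
        (∏ j, ‖x j‖ ^ (2 * α j)) *
          Real.exp (-(2 * C / h) * ∑ j, ‖x j‖ ^ 2)) ≤
      (n : ℝ) * Real.exp (-C * K ^ 2 / (n * h)) * (h / C) ^ (n + ∑ j, α j) *
        Real.pi ^ n * (∏ j, (Nat.factorial (α j) : ℝ)) := by
  have hc : 0 < C / h := div_pos hC hh
  have hn' : (1 : ℝ) ≤ n := by exact_mod_cast hn
  have hdecay : rexp (-(C / h) * K ^ 2) ≤ n * rexp (-C * K ^ 2 / (n * h)) :=
    calc rexp (-(C / h) * K ^ 2) ≤ rexp (-C * K ^ 2 / (n * h)) := by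
          gcongr
          rw [le_div_iff₀ (by positivity)]
          field_simp
          nlinarith [sq_nonneg K]
      _ ≤ n * rexp (-C * K ^ 2 / (n * h)) := le_mul_of_one_le_left (exp_pos _).le hn'
  rw [mul_div_assoc]
  calc _ ≤ rexp (-(C / h) * K ^ 2) * ∫ x : Fin n → ℂ,
        (∏ j, ‖x j‖ ^ (2 * α j)) * rexp (-(C / h) * ∑ j, ‖x j‖ ^ 2) :=
        setIntegral_norm_gt_prod_norm_pow_mul_exp_le α hc hK.le
    _ = rexp (-(C / h) * K ^ 2) * (h / C) ^ (n + ∑ j, α j) * π ^ n * ∏ j, ((α j)! : ℝ) := by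
        rw [integral_prod_norm_pow_mul_exp_neg_mul_sum_sq α hc, Fintype.card_fin,
          div_eq_mul_inv (π ^ n * _), ← inv_pow, inv_div]
        ring
    _ ≤ _ := by gcongr
end

section
/- Let Φ : ℂⁿ → ℝ be a strictly convex real-valued quadratic weight, Φ(x) = Re(x·Sx) + x·(H x̄) with S symmetric, H Hermitian, and Φ(x) > 0 for x ≠ 0, and let α ∈ ℕⁿ be a multi-index. Then ∫_{ℂⁿ} ∏_{j=1}^n |x_j|^{2α_j} e^{−2Φ(x)} dL(x) = 2^{|α|+n−1} (|α|+n−1)! ∫_{{‖ω‖=1}} ∏_{j=1}^n |ω_j|^{2α_j} (4Φ(ω))^{−|α|−n} dσ(ω), where dL is Lebesgue measure on ℂⁿ and dσ the induced surface measure on the unit sphere. -/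
open Matrix MeasureTheory Complex
open scoped ENNReal

/-- The real-valued quadratic weight `Φ(x) = Re(x·Sx) + x·(H x̄)` on `ℂⁿ`
(for `H` Hermitian the second term is real, so we take its real part). -/
noncomputable def quadWeight (n : ℕ) (S H : Matrix (Fin n) (Fin n) ℂ)
    (x : Fin n → ℂ) : ℝ :=
  (x ⬝ᵥ (S *ᵥ x)).re + (x ⬝ᵥ (H *ᵥ (star x))).re

/-- The unit sphere of `ℂⁿ ≅ ℝ^{2n}` (with the Euclidean norm). -/
def unitSphereC (n : ℕ) : Type :=
  {ω : Fin n → ℂ // ∑ j, ‖ω j‖ ^ 2 = 1}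

noncomputable instance (n : ℕ) : MeasurableSpace (unitSphereC n) :=
  Subtype.instMeasurableSpace

/-!
In polar coordinates `x = r ω` the monomial scales like `r ^ (2 |α|)` and `Φ` like `r ^ 2`, so
after Tonelli the radial integral for fixed `ω` is the Gamma integral
`∫₀^∞ r ^ (2k - 1) e ^ (-2 Φ(ω) r²) dr = (k - 1)! / (2 (2 Φ(ω)) ^ k)`, `k = |α| + n`,
which is `2 ^ (k - 1) (k - 1)! (4 Φ(ω)) ^ (-k)`. Tonelli needs `σ` to be s-finite; it is in fact
finite, as the polar formula shows when applied to a ball.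
-/

open Set

lemma quadWeight_continuous (n : ℕ) (S H : Matrix (Fin n) (Fin n) ℂ) :
    Continuous (quadWeight n S H) := by
  unfold quadWeight
  fun_prop

lemma quadWeight_ofReal_mul (n : ℕ) (S H : Matrix (Fin n) (Fin n) ℂ) (r : ℝ)
    (x : Fin n → ℂ) :
    quadWeight n S H (fun j => (r : ℂ) * x j) = r ^ 2 * quadWeight n S H x := by
  change quadWeight n S H ((r : ℂ) • x) = _
  simp only [quadWeight, smul_dotProduct, Matrix.mulVec_smul, dotProduct_smul,
    star_smul, Complex.star_def, Complex.conj_ofReal, smul_eq_mul]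
  ring_nf
  simp only [← Complex.ofReal_pow, Complex.re_ofReal_mul]

lemma prod_norm_ofReal_mul_pow {n : ℕ} {r : ℝ} (hr : 0 ≤ r) (x : Fin n → ℂ)
    (m : Fin n → ℕ) :
    ∏ j, ‖(r : ℂ) * x j‖ ^ m j = r ^ (∑ j, m j) * ∏ j, ‖x j‖ ^ m j := by
  simp only [norm_mul, Complex.norm_real, Real.norm_eq_abs, abs_of_nonneg hr, mul_pow,
    Finset.prod_mul_distrib, Finset.prod_pow_eq_pow_sum]

namespace unitSphereC

variable {n : ℕ}

lemma ne_zero (ω : unitSphereC n) : ω.1 ≠ 0 := by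
  intro h
  simpa [h] using ω.2

lemma norm_le_one (ω : unitSphereC n) (j : Fin n) : ‖ω.1 j‖ ≤ 1 := by
  refine (pow_le_one_iff_of_nonneg (norm_nonneg _) two_ne_zero).1 ?_
  calc ‖ω.1 j‖ ^ 2 ≤ ∑ i, ‖ω.1 i‖ ^ 2 :=
        Finset.single_le_sum (f := fun i => ‖ω.1 i‖ ^ 2) (fun i _ => by positivity)
          (Finset.mem_univ j)
    _ = 1 := ω.2

end unitSphereC

lemma lintegral_Ioi_pow_mul_exp_neg_mul_sq {k : ℕ} (hk : k ≠ 0) {b : ℝ} (hb : 0 < b) :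
    ∫⁻ r in Ioi (0 : ℝ), ENNReal.ofReal (r ^ (2 * k - 1) * Real.exp (-b * r ^ 2)) =
      ENNReal.ofReal ((Nat.factorial (k - 1) : ℝ) / (2 * b ^ k)) := by
  have hs : (-1 : ℝ) < ((2 * k - 1 : ℕ) : ℝ) := neg_one_lt_zero.trans_le (Nat.cast_nonneg _)
  have hexp : (((2 * k - 1 : ℕ) : ℝ) + 1) / 2 = ((k - 1 : ℕ) : ℝ) + 1 := by
    push_cast [Nat.cast_sub (by omega : 1 ≤ 2 * k), Nat.cast_sub (by omega : 1 ≤ k)]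
    ring
  have hk' : ((k - 1 : ℕ) : ℝ) + 1 = k := by
    push_cast [Nat.cast_sub (by omega : 1 ≤ k)]
    ring
  simp_rw [← Real.rpow_natCast (n := 2 * k - 1), ← Real.rpow_two]
  rw [← ofReal_integral_eq_lintegral_ofReal]
  · rw [integral_rpow_mul_exp_neg_mul_rpow two_pos hs hb, hexp, Real.Gamma_nat_eq_factorial,
      neg_div, hexp, hk', Real.rpow_neg hb.le, Real.rpow_natCast]
    ring_nf
  · simp_rw [Real.rpow_two]
    exact integrableOn_rpow_mul_exp_neg_mul_sq hb hs
  · filter_upwards [self_mem_ae_restrict measurableSet_Ioi] with r hr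
    have : (0 : ℝ) < r := hr
    positivity

def IsPolarMeasure (n : ℕ) (σ : Measure (unitSphereC n)) : Prop :=
  ∀ f : (Fin n → ℂ) → ℝ≥0∞, Measurable f →
    (∫⁻ x : Fin n → ℂ, f x) =
      ∫⁻ r in Ioi (0 : ℝ),
        (∫⁻ ω : unitSphereC n, f (fun j => (r : ℂ) * ω.1 j) ∂σ) *
          ENNReal.ofReal (r ^ (2 * n - 1))

namespace IsPolarMeasure

variable {n : ℕ} {σ : Measure (unitSphereC n)}

/-- Test the polar formula against the sup-norm ball of radius `2`, which contains `r • ω` for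
`r ∈ [1, 2]`. -/
lemma isFiniteMeasure (hσ : IsPolarMeasure n σ) : IsFiniteMeasure σ := by
  set B := Metric.closedBall (0 : Fin n → ℂ) 2
  have hB : ∀ r ∈ Icc (1 : ℝ) 2, ∀ ω : unitSphereC n,
      B.indicator (1 : (Fin n → ℂ) → ℝ≥0∞) (fun j => (r : ℂ) * ω.1 j) = 1 := by
    intro r hr ω
    refine indicator_of_mem ?_ _
    rw [Metric.mem_closedBall, dist_zero_right, pi_norm_le_iff_of_nonneg zero_le_two]
    intro j
    rw [norm_mul, Complex.norm_real, Real.norm_eq_abs, abs_of_nonneg (by linarith [hr.1])]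
    nlinarith [ω.norm_le_one j, norm_nonneg (ω.1 j), hr.2]
  constructor
  calc σ univ = ∫⁻ _ in Icc (1 : ℝ) 2, σ univ := by norm_num
    _ ≤ ∫⁻ r in Icc (1 : ℝ) 2,
          (∫⁻ ω, B.indicator 1 (fun j => (r : ℂ) * ω.1 j) ∂σ) *
            ENNReal.ofReal (r ^ (2 * n - 1)) := by
      refine setLIntegral_mono' measurableSet_Icc fun r hr => ?_
      simp only [hB r hr, lintegral_one]
      exact le_mul_of_one_le_right' (ENNReal.one_le_ofReal.2 (one_le_pow₀ hr.1))
    _ ≤ ∫⁻ r in Ioi (0 : ℝ),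
          (∫⁻ ω, B.indicator 1 (fun j => (r : ℂ) * ω.1 j) ∂σ) *
            ENNReal.ofReal (r ^ (2 * n - 1)) :=
      lintegral_mono_set fun r hr => one_pos.trans_le hr.1
    _ = volume B := by
      rw [← hσ _ (measurable_one.indicator Metric.isClosed_closedBall.measurableSet),
        lintegral_indicator_one Metric.isClosed_closedBall.measurableSet]
    _ < ⊤ := measure_closedBall_lt_top

lemma lintegral_eq_lintegral_lintegral_Ioi [SFinite σ] (hσ : IsPolarMeasure n σ)
    {f : (Fin n → ℂ) → ℝ≥0∞} (hf : Measurable f) :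
    ∫⁻ x, f x = ∫⁻ ω, (∫⁻ r in Ioi (0 : ℝ),
      f (fun j => (r : ℂ) * ω.1 j) * ENNReal.ofReal (r ^ (2 * n - 1))) ∂σ := by
  have hmul : Measurable fun p : ℝ × unitSphereC n => fun j => (p.1 : ℂ) * p.2.1 j :=
    measurable_pi_lambda _ fun j => (Complex.measurable_ofReal.comp measurable_fst).mul
      ((measurable_pi_apply j).comp (measurable_subtype_coe.comp measurable_snd))
  rw [hσ f hf, ← lintegral_lintegral_swap]
  · simp_rw [← lintegral_mul_const' _ _ ENNReal.ofReal_ne_top]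
  · exact ((hf.comp hmul).mul (ENNReal.measurable_ofReal.comp
      (measurable_fst.pow_const _))).aemeasurable

end IsPolarMeasure

lemma lintegral_Ioi_monomial_mul_exp_neg_quadWeight {n : ℕ} (hn : 1 ≤ n)
    (S H : Matrix (Fin n) (Fin n) ℂ) (α : Fin n → ℕ) {x : Fin n → ℂ}
    (hx : 0 < quadWeight n S H x) :
    ∫⁻ r in Ioi (0 : ℝ),
        ENNReal.ofReal ((∏ j, ‖(r : ℂ) * x j‖ ^ (2 * α j)) *
          Real.exp (-2 * quadWeight n S H (fun j => (r : ℂ) * x j))) *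
        ENNReal.ofReal (r ^ (2 * n - 1)) =
      ENNReal.ofReal (2 ^ ((∑ j, α j) + n - 1) * (Nat.factorial ((∑ j, α j) + n - 1) : ℝ)) *
        ENNReal.ofReal ((∏ j, ‖x j‖ ^ (2 * α j)) *
          ((4 * quadWeight n S H x) ^ ((∑ j, α j) + n))⁻¹) := by
  obtain ⟨m, hm⟩ : ∃ m, (∑ j, α j) + n = m + 1 := ⟨(∑ j, α j) + n - 1, by omega⟩
  set P := ∏ j, ‖x j‖ ^ (2 * α j)
  set φ := quadWeight n S H x
  have hP : 0 ≤ P := by positivity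
  have hradial : ∀ r ∈ Ioi (0 : ℝ),
      ENNReal.ofReal ((∏ j, ‖(r : ℂ) * x j‖ ^ (2 * α j)) *
          Real.exp (-2 * quadWeight n S H (fun j => (r : ℂ) * x j))) *
        ENNReal.ofReal (r ^ (2 * n - 1)) =
      ENNReal.ofReal P * ENNReal.ofReal (r ^ (2 * (m + 1) - 1) * Real.exp (-(2 * φ) * r ^ 2)) := by
    intro r hr
    have hr : (0 : ℝ) < r := hr
    rw [prod_norm_ofReal_mul_pow hr.le, quadWeight_ofReal_mul,
      ← ENNReal.ofReal_mul (by positivity), ← ENNReal.ofReal_mul hP, ← Finset.mul_sum,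
      show 2 * (m + 1) - 1 = 2 * ∑ j, α j + (2 * n - 1) by omega, pow_add]
    simp only [P, φ]
    ring_nf
  rw [setLIntegral_congr_fun measurableSet_Ioi hradial,
    lintegral_const_mul' _ _ ENNReal.ofReal_ne_top,
    lintegral_Ioi_pow_mul_exp_neg_mul_sq (k := m + 1) m.succ_ne_zero (by positivity),
    ← ENNReal.ofReal_mul hP, ← ENNReal.ofReal_mul (by positivity), hm, Nat.add_sub_cancel]
  congr 1
  have h4 : (4 * φ) ^ (m + 1) = 2 ^ m * (2 * (2 * φ) ^ (m + 1)) := by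
    rw [show 4 * φ = 2 * (2 * φ) by ring, mul_pow, pow_succ]
    ring
  rw [h4]
  field_simp

theorem stmt11_general (n : ℕ) (hn : 1 ≤ n) (S H : Matrix (Fin n) (Fin n) ℂ)
    (hconv : ∀ x : Fin n → ℂ, x ≠ 0 → 0 < quadWeight n S H x)
    (σm : Measure (unitSphereC n))
    (hpolar : ∀ f : (Fin n → ℂ) → ℝ≥0∞, Measurable f →
      (∫⁻ x : Fin n → ℂ, f x) =
        ∫⁻ r in Set.Ioi (0 : ℝ),
          (∫⁻ ω : unitSphereC n, f (fun j => (r : ℂ) * ω.1 j) ∂σm) *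
            ENNReal.ofReal (r ^ (2 * n - 1)))
    (α : Fin n → ℕ) :
    (∫ x : Fin n → ℂ,
        (∏ j, ‖x j‖ ^ (2 * α j)) * Real.exp (-2 * quadWeight n S H x)) =
      2 ^ ((∑ j, α j) + n - 1) * (Nat.factorial ((∑ j, α j) + n - 1) : ℝ) *
        ∫ ω : unitSphereC n,
          (∏ j, ‖ω.1 j‖ ^ (2 * α j)) *
            ((4 * quadWeight n S H ω.1) ^ ((∑ j, α j) + n))⁻¹ ∂σm := by
  have hσ : IsPolarMeasure n σm := hpolar
  have : IsFiniteMeasure σm := hσ.isFiniteMeasure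
  have hΦ := quadWeight_continuous n S H
  have hcoe : Measurable fun ω : unitSphereC n => ω.1 := measurable_subtype_coe
  rw [integral_eq_lintegral_of_nonneg_ae (ae_of_all _ fun x => by positivity)
      (by fun_prop : Continuous _).aestronglyMeasurable,
    hσ.lintegral_eq_lintegral_lintegral_Ioi (by fun_prop : Continuous _).measurable.ennreal_ofReal,
    lintegral_congr fun ω =>
      lintegral_Ioi_monomial_mul_exp_neg_quadWeight hn S H α (hconv _ ω.ne_zero),
    lintegral_const_mul' _ _ ENNReal.ofReal_ne_top, ENNReal.toReal_mul,
    ENNReal.toReal_ofReal (by positivity),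
    integral_eq_lintegral_of_nonneg_ae (ae_of_all _ fun ω => ?_) ?_]
  · exact ((by fun_prop : Measurable fun x : Fin n → ℂ => (∏ j, ‖x j‖ ^ (2 * α j)) *
      ((4 * quadWeight n S H x) ^ ((∑ j, α j) + n))⁻¹).comp hcoe).aestronglyMeasurable
  · have := hconv _ ω.ne_zero
    positivity

/-- the polar-coordinates evaluation
`∫_{ℂⁿ} ∏ |x_j|^{2α_j} e^{−2Φ} dL = 2^{|α|+n−1}(|α|+n−1)! ∫_{‖ω‖=1} ∏ |ω_j|^{2α_j} (4Φ(ω))^{−|α|−n} dσ(ω)`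
for a strictly convex real-valued quadratic weight `Φ`, where `dσ` is the surface measure on
the unit sphere induced by Lebesgue measure (characterized by the polar-coordinates formula). -/
theorem stmt11 (n : ℕ) (hn : 1 ≤ n) (S H : Matrix (Fin n) (Fin n) ℂ)
    (hS : Sᵀ = S) (hH : Hᴴ = H)
    (hconv : ∀ x : Fin n → ℂ, x ≠ 0 → 0 < quadWeight n S H x)
    (σm : Measure (unitSphereC n))
    (hpolar : ∀ f : (Fin n → ℂ) → ℝ≥0∞, Measurable f →
      (∫⁻ x : Fin n → ℂ, f x) =
        ∫⁻ r in Set.Ioi (0 : ℝ),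
          (∫⁻ ω : unitSphereC n, f (fun j => (r : ℂ) * ω.1 j) ∂σm) *
            ENNReal.ofReal (r ^ (2 * n - 1)))
    (α : Fin n → ℕ) :
    (∫ x : Fin n → ℂ,
        (∏ j, ‖x j‖ ^ (2 * α j)) * Real.exp (-2 * quadWeight n S H x)) =
      2 ^ ((∑ j, α j) + n - 1) * (Nat.factorial ((∑ j, α j) + n - 1) : ℝ) *
        ∫ ω : unitSphereC n,
          (∏ j, ‖ω.1 j‖ ^ (2 * α j)) *
            ((4 * quadWeight n S H ω.1) ^ ((∑ j, α j) + n))⁻¹ ∂σm :=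
  stmt11_general n hn S H hconv σm hpolar α
end

section
/- Let a ∈ (0,1). Then, as N → ∞ through the natural numbers, √N · (1 − a)^{N+1} · ∫_0^{2π} (1 − a cos(2t))^{−(N+1)} dt converges to √(2π(1 − a)/a). -/
/-!
The integrand has period `π`, and the substitution `x = tan t` turns
`∫_{-π/2}^{π/2} (1 - a cos 2t)^{-(N+1)} dt` into
`∫_ℝ (1 + x²)^N / ((1 - a) + (1 + a) x²)^{N+1} dx`.
After the scaling `x = y / √N` and with `c = (1 + a) / (1 - a)`, the integrand becomes
`(1 + y²/N)^N / (1 + c y²/N)^{N+1}`, which tends pointwise to the Gaussian `exp (-(c - 1) y²)`.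
Since `(1 + u) / (1 + c u) ≤ exp (-δ min u 1)` with `δ = (c - 1) / (c + 1)`, it is dominated,
uniformly in `N`, by `exp (-δ y²)` where `y² ≤ N` and by a multiple of `(1 + y²)⁻¹`
where `y² ≥ N`. Dominated convergence and the Gaussian integral `√(π / (c - 1))` give the
limit.
-/

open Real Filter MeasureTheory Set Topology

lemma one_sub_mul_cos_pos {a : ℝ} (ha : |a| < 1) (x : ℝ) : 0 < 1 - a * cos x := by
  have h : a * cos x ≤ |a| := by
    calc a * cos x ≤ |a * cos x| := le_abs_self _
      _ = |a| * |cos x| := abs_mul a (cos x)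
      _ ≤ |a| := mul_le_of_le_one_right (abs_nonneg a) (abs_cos_le_one x)
  linarith

lemma Function.Periodic.intervalIntegral_zero_two_mul_eq {f : ℝ → ℝ} {T : ℝ}
    (hf : Function.Periodic f T) (h_int : ∀ t₁ t₂, IntervalIntegrable f volume t₁ t₂) :
    ∫ t in 0..2 * T, f t = 2 * ∫ t in -(T / 2)..T / 2, f t := by
  have htwo := hf.intervalIntegral_add_zsmul_eq 2 0 h_int
  have hshift := hf.intervalIntegral_add_eq 0 (-(T / 2))
  rw [zero_add, show -(T / 2) + T = T / 2 by ring] at hshift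
  simpa [hshift] using htwo

lemma integral_comp_tan_div_cos_sq (G : ℝ → ℝ) :
    ∫ t in -(π / 2)..π / 2, G (tan t) / cos t ^ 2 = ∫ x, G x := by
  have hderiv : ∀ t ∈ Ioo (-(π / 2)) (π / 2),
      HasDerivWithinAt tan (1 / cos t ^ 2) (Ioo (-(π / 2)) (π / 2)) t := fun t ht =>
    (hasDerivAt_tan (cos_pos_of_mem_Ioo ht).ne').hasDerivWithinAt
  have hsubst := integral_image_eq_integral_abs_deriv_smul measurableSet_Ioo hderiv injOn_tan G
  rw [image_tan_Ioo, setIntegral_univ] at hsubst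
  rw [hsubst, intervalIntegral.integral_of_le (by linarith [pi_pos]),
    integral_Ioc_eq_integral_Ioo]
  refine setIntegral_congr_fun measurableSet_Ioo fun t ht => ?_
  rw [abs_of_pos (by have := cos_pos_of_mem_Ioo ht; positivity), smul_eq_mul]
  ring

lemma inv_one_sub_mul_cos_two_mul_pow_eq {a t : ℝ} (ht : cos t ≠ 0) (n : ℕ) :
    ((1 - a * cos (2 * t)) ^ (n + 1))⁻¹ =
      (1 + tan t ^ 2) ^ n / ((1 - a) + (1 + a) * tan t ^ 2) ^ (n + 1) / cos t ^ 2 := by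
  have hsec : 1 + tan t ^ 2 = (cos t ^ 2)⁻¹ := by
    rw [tan_eq_sin_div_cos]
    field_simp
    linear_combination sin_sq_add_cos_sq t
  have hden : (1 - a) + (1 + a) * tan t ^ 2 = (1 - a * cos (2 * t)) / cos t ^ 2 := by
    rw [tan_eq_sin_div_cos, cos_two_mul]
    field_simp
    linear_combination (1 + a) * sin_sq_add_cos_sq t
  rw [hsec, hden, div_pow, inv_pow, ← pow_mul]
  field_simp
  ring

lemma integral_inv_one_sub_mul_cos_two_mul_pow (a : ℝ) (n : ℕ) :
    ∫ t in -(π / 2)..π / 2, ((1 - a * cos (2 * t)) ^ (n + 1))⁻¹ =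
      ∫ x, (1 + x ^ 2) ^ n / ((1 - a) + (1 + a) * x ^ 2) ^ (n + 1) := by
  rw [← integral_comp_tan_div_cos_sq]
  exact intervalIntegral.integral_congr_Ioo_of_le (by linarith [pi_pos]) fun t ht =>
    inv_one_sub_mul_cos_two_mul_pow_eq (cos_pos_of_mem_Ioo ht).ne' n

lemma integral_zero_two_pi_inv_one_sub_mul_cos_two_mul_pow {a : ℝ} (ha : |a| < 1) (n : ℕ) :
    ∫ t in 0..2 * π, ((1 - a * cos (2 * t)) ^ (n + 1))⁻¹ =
      2 * ∫ x, (1 + x ^ 2) ^ n / ((1 - a) + (1 + a) * x ^ 2) ^ (n + 1) := by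
  have hper : Function.Periodic (fun t => ((1 - a * cos (2 * t)) ^ (n + 1))⁻¹) π := fun t => by
    simp only [mul_add, cos_add_two_pi]
  have hcont : Continuous (fun t => ((1 - a * cos (2 * t)) ^ (n + 1))⁻¹) :=
    (by fun_prop : Continuous _).inv₀ fun t => pow_ne_zero _ (one_sub_mul_cos_pos ha _).ne'
  rw [hper.intervalIntegral_zero_two_mul_eq fun _ _ => hcont.intervalIntegrable _ _,
    integral_inv_one_sub_mul_cos_two_mul_pow]

lemma sqrt_mul_pow_mul_integral_eq {p q : ℝ} (hp : p ≠ 0) {N : ℕ} (hN : N ≠ 0) :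
    √N * p ^ (N + 1) * ∫ x, (1 + x ^ 2) ^ N / (p + q * x ^ 2) ^ (N + 1) =
      ∫ y, (1 + y ^ 2 / N) ^ N / (1 + q / p * (y ^ 2 / N)) ^ (N + 1) := by
  have hsqrt : 0 < √(N : ℝ) := by positivity
  rw [mul_comm (√(N : ℝ)), mul_assoc, ← abs_of_pos hsqrt, ← smul_eq_mul |√(N : ℝ)|,
    ← Measure.integral_comp_div, ← integral_const_mul]
  congr 1 with y
  rw [div_pow, sq_sqrt N.cast_nonneg, mul_div_assoc',
    show p + q * (y ^ 2 / N) = p * (1 + q / p * (y ^ 2 / N)) by field_simp, mul_pow,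
    mul_div_mul_left _ _ (pow_ne_zero _ hp)]

lemma tendsto_one_add_div_pow_succ_exp (x : ℝ) :
    Tendsto (fun n : ℕ => (1 + x / n) ^ (n + 1)) atTop (𝓝 (exp x)) := by
  have hbase : Tendsto (fun n : ℕ => 1 + x / n) atTop (𝓝 1) := by
    simpa using (tendsto_const_div_atTop_nhds_zero_nat x).const_add 1
  simpa [pow_succ] using (tendsto_one_add_div_pow_exp x).mul hbase

section Laplace

variable {c : ℝ}

lemma one_add_div_one_add_mul_le_exp (hc : 1 ≤ c) {u : ℝ} (hu : 0 ≤ u) :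
    (1 + u) / (1 + c * u) ≤ exp (-((c - 1) / (c + 1) * min u 1)) := by
  refine le_trans ?_ (add_one_le_exp _)
  rw [div_le_iff₀ (by positivity), neg_add_eq_sub, ← sub_nonneg]
  have hc0 : 0 ≤ c - 1 := sub_nonneg.mpr hc
  have hc1 : 0 < c + 1 := by linarith
  rcases le_total u 1 with hu1 | hu1
  · have hgap : (1 - (c - 1) / (c + 1) * u) * (1 + c * u) - (1 + u) =
        (c - 1) * c * u * (1 - u) / (c + 1) := by field_simp; ring
    have hu1' : 0 ≤ 1 - u := sub_nonneg.mpr hu1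
    rw [min_eq_left hu1, hgap]
    positivity
  · have hgap : (1 - (c - 1) / (c + 1) * 1) * (1 + c * u) - (1 + u) =
        (c - 1) * (u - 1) / (c + 1) := by field_simp; ring
    have hu1' : 0 ≤ u - 1 := sub_nonneg.mpr hu1
    rw [min_eq_right hu1, hgap]
    positivity

lemma laplace_integrand_le (hc : 1 < c) {N : ℕ} (hN : N ≠ 0) (y : ℝ) :
    (1 + y ^ 2 / N) ^ N / (1 + c * (y ^ 2 / N)) ^ (N + 1) ≤
      exp (-((c - 1) / (c + 1)) * y ^ 2) + 2 * (c + 1) / (c - 1) * (1 + y ^ 2)⁻¹ := by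
  set δ := (c - 1) / (c + 1) with hδ
  have hδ0 : 0 < δ := div_pos (by linarith) (by linarith)
  set u := y ^ 2 / N with hu
  have hu0 : 0 ≤ u := by positivity
  have hcu : u ≤ c * u := le_mul_of_one_le_left hu0 hc.le
  have hratio := pow_le_pow_left₀ (by positivity) (one_add_div_one_add_mul_le_exp hc.le hu0) N
  rw [← exp_nat_mul] at hratio
  rw [pow_succ, ← div_div, ← div_pow]
  have htail : 0 ≤ 2 * (c + 1) / (c - 1) * (1 + y ^ 2)⁻¹ := by
    have := sub_pos.mpr hc
    positivity
  rcases le_total u 1 with hu1 | hu1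
  · have hexp : (N : ℝ) * -(δ * min u 1) = -δ * y ^ 2 := by
      rw [min_eq_left hu1, hu]
      field_simp
    rw [hexp] at hratio
    calc ((1 + u) / (1 + c * u)) ^ N / (1 + c * u) ≤ ((1 + u) / (1 + c * u)) ^ N :=
          div_le_self (by positivity) (by linarith)
      _ ≤ _ := by linarith [exp_pos (-δ * y ^ 2)]
  · have hy1 : 1 ≤ y ^ 2 := by
      have hN1 : (1 : ℝ) ≤ N := by exact_mod_cast Nat.one_le_iff_ne_zero.mpr hN
      rw [hu, one_le_div (by positivity)] at hu1
      linarith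
    rw [min_eq_right hu1] at hratio
    calc ((1 + u) / (1 + c * u)) ^ N / (1 + c * u)
        ≤ exp (N * -(δ * 1)) / u := by gcongr; linarith
      _ = δ * N * exp (-(δ * N)) / (δ * y ^ 2) := by rw [hu]; field_simp
      _ ≤ 1 / (δ * y ^ 2) := by
          have hy0 : 0 < y ^ 2 := by linarith
          gcongr
          exact (mul_exp_neg_le_exp_neg_one _).trans (exp_le_one_iff.mpr (by norm_num))
      _ ≤ 2 / δ / (1 + y ^ 2) := by
          rw [div_div, div_le_div_iff₀ (by positivity) (by positivity)]
          nlinarith [mul_nonneg hδ0.le (sub_nonneg.mpr hy1)]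
      _ ≤ _ := by
          rw [hδ, div_div_eq_mul_div, ← div_eq_mul_inv]
          linarith [exp_pos (-δ * y ^ 2)]

lemma tendsto_laplace_integrand (y : ℝ) :
    Tendsto (fun N : ℕ => (1 + y ^ 2 / N) ^ N / (1 + c * (y ^ 2 / N)) ^ (N + 1)) atTop
      (𝓝 (exp (-(c - 1) * y ^ 2))) := by
  have h := (tendsto_one_add_div_pow_exp (y ^ 2)).div
    (tendsto_one_add_div_pow_succ_exp (c * y ^ 2)) (exp_pos _).ne'
  rw [← exp_sub, show y ^ 2 - c * y ^ 2 = -(c - 1) * y ^ 2 by ring] at h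
  simpa only [Pi.div_def, mul_div_assoc] using h

lemma tendsto_integral_laplace_integrand (hc : 1 < c) :
    Tendsto (fun N : ℕ => ∫ y, (1 + y ^ 2 / N) ^ N / (1 + c * (y ^ 2 / N)) ^ (N + 1)) atTop
      (𝓝 √(π / (c - 1))) := by
  rw [← integral_gaussian]
  have hδ : 0 < (c - 1) / (c + 1) := div_pos (by linarith) (by linarith)
  refine tendsto_integral_filter_of_dominated_convergence
    (fun y => exp (-((c - 1) / (c + 1)) * y ^ 2) + 2 * (c + 1) / (c - 1) * (1 + y ^ 2)⁻¹)
    (Eventually.of_forall fun N => (by fun_prop : Measurable _).aestronglyMeasurable) ?_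
    ((integrable_exp_neg_mul_sq hδ).add (integrable_inv_one_add_sq.const_mul _))
    (Eventually.of_forall tendsto_laplace_integrand)
  filter_upwards [eventually_ne_atTop 0] with N hN
  refine Eventually.of_forall fun y => ?_
  have hc0 : 0 < c := by linarith
  rw [norm_of_nonneg (by positivity)]
  exact laplace_integrand_le hc hN y

end Laplace

/-- the Laplace-method asymptotic
`√N (1−a)^{N+1} ∫_0^{2π} (1 − a cos 2t)^{−(N+1)} dt → √(2π(1−a)/a)` as `N → ∞`. -/
theorem stmt18 (a : ℝ) (ha : 0 < a) (ha1 : a < 1) :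
    Tendsto
      (fun N : ℕ =>
        Real.sqrt N * (1 - a) ^ (N + 1) *
          ∫ t in (0 : ℝ)..(2 * Real.pi), ((1 - a * Real.cos (2 * t)) ^ (N + 1))⁻¹)
      atTop (nhds (Real.sqrt (2 * Real.pi * (1 - a) / a))) := by
  have h1a : 0 < 1 - a := by linarith
  have hc : 1 < (1 + a) / (1 - a) := by rw [one_lt_div h1a]; linarith
  have hlimit : 2 * √(π / ((1 + a) / (1 - a) - 1)) = √(2 * π * (1 - a) / a) := by
    have hgap : (1 + a) / (1 - a) - 1 = 2 * a / (1 - a) := by field_simp; ring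
    have ha0 : a ≠ 0 := ha.ne'
    conv_lhs => rw [← sqrt_sq zero_le_two, ← sqrt_mul (sq_nonneg 2), hgap]
    congr 1
    field_simp
  rw [← hlimit]
  refine ((tendsto_integral_laplace_integrand hc).const_mul 2).congr' ?_
  filter_upwards [eventually_ne_atTop 0] with N hN
  rw [integral_zero_two_pi_inv_one_sub_mul_cos_two_mul_pow (abs_lt.mpr ⟨by linarith, ha1⟩),
    ← sqrt_mul_pow_mul_integral_eq h1a.ne' hN]
  ring
end
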